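/- Let a>0 and β∈(0,1). There exist constants 0 < c_1 ≤ c_2 depending only on a, d and β such that for every nonnegative measurable function f on ℝ^d and every x ∈ ℝ^d: c_1 · π^{-d/2} e^{-β|x|²} ∫_{B(0, a·m(x))} f(x−y) |y|^{dβ−d} dy ≤ ∫_{B(x, a·m(x))} f(y) [γ(B(x,|x−y|))]^{β−1} dγ(y) ≤ c_2 · π^{-d/2} e^{-β|x|²} ∫_{B(0, a·m(x))} f(x−y) |y|^{dβ−d} dy, where the middle integral is with respect to the Gaussian measure γ and the outer two are with respect to Lebesgue measure. -/

import Mathlib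

open MeasureTheory ENNReal Real Set Metric
open scoped Classical

noncomputable section

/-- ℝ^d with the Euclidean norm. -/
abbrev Euc (d : ℕ) := EuclideanSpace ℝ (Fin d)

/-- The Gaussian measure dγ(x) = π^{-d/2} e^{-|x|²} dx. -/
def gaussMeasure (d : ℕ) : Measure (Euc d) :=
  volume.withDensity fun x => ENNReal.ofReal (Real.pi ^ (-(d : ℝ) / 2) * Real.exp (-‖x‖ ^ 2))

/-- m(x) = min(1, 1/|x|) (with value 1 at x = 0). -/
def adm {d : ℕ} (x : Euc d) : ℝ := if ‖x‖ ≤ 1 then 1 else ‖x‖⁻¹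

/-! On the ball `B(x, a m(x))` the squared norm oscillates by at most `K = 2a + a²`, so the
Gaussian density `φ` stays within a factor `e^{±K}` of `φ(x)`, and `γ(B(x, ρ))` is comparable to
`φ(x) |B(x, ρ)| = φ(x) |B(0, 1)| ρ^d` for every `ρ` up to that radius. Hence the integrand
`φ(y) γ(B(x, |x - y|))^{β - 1}` is comparable to `φ(x)^β (|B(0, 1)| |x - y|^d)^{β - 1}`, a fixed
multiple of `π^{-d/2} e^{-β|x|²} |x - y|^{dβ - d}`, and the substitution `y ↦ x - y` turns the
integral of the latter into the radial integral. -/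

theorem adm_le_one {d : ℕ} (x : Euc d) : adm x ≤ 1 := by
  unfold adm
  split_ifs with h
  · exact le_rfl
  · exact inv_le_one_of_one_le₀ (by linarith)

theorem adm_mul_norm_le_one {d : ℕ} (x : Euc d) : adm x * ‖x‖ ≤ 1 := by
  unfold adm
  split_ifs with h
  · simpa using h
  · rw [inv_mul_cancel₀ (by linarith)]

theorem abs_norm_sq_sub_norm_sq_le {d : ℕ} {a : ℝ} (ha : 0 ≤ a) {x y : Euc d}
    (h : ‖y - x‖ ≤ a * adm x) : |‖y‖ ^ 2 - ‖x‖ ^ 2| ≤ 2 * a + a ^ 2 := by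
  have hδ : ‖y - x‖ ≤ a := h.trans (mul_le_of_le_one_right ha (adm_le_one x))
  have hδx : ‖y - x‖ * ‖x‖ ≤ a :=
    calc ‖y - x‖ * ‖x‖ ≤ a * (adm x * ‖x‖) := by
          rw [← mul_assoc]; exact mul_le_mul_of_nonneg_right h (norm_nonneg x)
      _ ≤ a := mul_le_of_le_one_right ha (adm_mul_norm_le_one x)
  have hy : ‖y‖ ≤ ‖x‖ + ‖y - x‖ := norm_le_norm_add_norm_sub' y x
  calc |‖y‖ ^ 2 - ‖x‖ ^ 2| = |‖y‖ - ‖x‖| * (‖y‖ + ‖x‖) := by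
        rw [sq_sub_sq, abs_mul, abs_of_nonneg (by positivity : 0 ≤ ‖y‖ + ‖x‖), mul_comm]
    _ ≤ ‖y - x‖ * (2 * ‖x‖ + ‖y - x‖) :=
        mul_le_mul (abs_norm_sub_norm_le y x) (by linarith) (by positivity) (norm_nonneg _)
    _ ≤ 2 * a + a ^ 2 := by nlinarith [norm_nonneg (y - x)]

theorem setLIntegral_ball_zero_comp_sub {E : Type*} [NormedAddCommGroup E] [MeasurableSpace E]
    [BorelSpace E] (μ : Measure E) [μ.IsAddLeftInvariant] [μ.IsNegInvariant]
    (g : E → ℝ≥0∞) (x : E) (r : ℝ) :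
    ∫⁻ y in ball 0 r, g (x - y) ∂μ = ∫⁻ y in ball x r, g y ∂μ := by
  rw [← lintegral_indicator measurableSet_ball, ← lintegral_indicator measurableSet_ball,
    ← lintegral_sub_left_eq_self _ x]
  congr 1 with y
  simp [indicator, dist_eq_norm, norm_sub_rev]

theorem ofReal_mul_setLIntegral_ball_zero_comp_sub {d : ℕ} (f : Euc d → ℝ≥0∞) (h : ℝ → ℝ)
    (x : Euc d) (r : ℝ) {c : ℝ} (hc : 0 ≤ c) :
    ENNReal.ofReal c * ∫⁻ y in ball 0 r, f (x - y) * ENNReal.ofReal (h ‖y‖) =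
      ∫⁻ y in ball x r, f y * ENNReal.ofReal (c * h ‖x - y‖) := by
  have hsub := setLIntegral_ball_zero_comp_sub volume
    (fun z => f z * ENNReal.ofReal (h ‖x - z‖)) x r
  simp only [_root_.sub_sub_cancel] at hsub
  rw [hsub, ← lintegral_const_mul' _ _ ENNReal.ofReal_ne_top]
  congr 1 with y
  rw [ENNReal.ofReal_mul hc, mul_left_comm]

theorem ENNReal.rpow_le_rpow_of_nonpos {x y : ℝ≥0∞} {z : ℝ} (hxy : x ≤ y) (hz : z ≤ 0) :
    y ^ z ≤ x ^ z := by
  rw [← neg_neg z, ENNReal.rpow_neg y, ENNReal.rpow_neg x]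
  exact ENNReal.inv_le_inv.2 (ENNReal.rpow_le_rpow hxy (by linarith))

theorem exp_mul_mul_rpow_eq {u V : ℝ} (hu : 0 < u) (hV : 0 < V) (s β : ℝ) :
    exp s * u * (exp (-s) * u * V) ^ (β - 1) = exp ((2 - β) * s) * (u ^ β * V ^ (β - 1)) := by
  have hexp : exp ((2 - β) * s) = exp s * exp (-s * (β - 1)) := by
    rw [← exp_add]; ring_nf
  rw [mul_rpow (by positivity) hV.le, mul_rpow (exp_pos _).le hu.le, ← exp_mul,
    rpow_sub_one hu.ne', hexp]
  field_simp

theorem volume_real_ball_rpow {d : ℕ} (x : Euc d) {ρ : ℝ} (hρ : 0 < ρ) (β : ℝ) :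
    volume.real (ball x ρ) ^ (β - 1) =
      volume.real (ball (0 : Euc d) 1) ^ (β - 1) * ρ ^ ((d : ℝ) * β - d) := by
  rw [measureReal_def, Measure.addHaar_ball_of_pos volume x hρ, finrank_euclideanSpace_fin,
    ENNReal.toReal_mul, toReal_ofReal (by positivity), ← measureReal_def,
    mul_rpow (by positivity) measureReal_nonneg, ← Real.rpow_natCast, ← rpow_mul hρ.le, mul_comm]
  ring_nf

def gaussDensity (d : ℕ) (y : Euc d) : ℝ := π ^ (-(d : ℝ) / 2) * exp (-‖y‖ ^ 2)

theorem gaussMeasure_eq_withDensity (d : ℕ) :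
    gaussMeasure d = volume.withDensity fun y => ENNReal.ofReal (gaussDensity d y) := rfl

theorem gaussDensity_pos {d : ℕ} (y : Euc d) : 0 < gaussDensity d y := by
  unfold gaussDensity; positivity

theorem continuous_gaussDensity (d : ℕ) : Continuous (gaussDensity d) := by
  unfold gaussDensity; fun_prop

theorem setLIntegral_gaussMeasure_eq {d : ℕ} (g : Euc d → ℝ≥0∞) {s : Set (Euc d)}
    (hs : MeasurableSet s) :
    ∫⁻ y in s, g y ∂gaussMeasure d = ∫⁻ y in s, ENNReal.ofReal (gaussDensity d y) * g y :=
  setLIntegral_withDensity_eq_setLIntegral_mul_non_measurable _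
    (continuous_gaussDensity d).measurable.ennreal_ofReal g hs
    (ae_of_all _ fun _ => ENNReal.ofReal_lt_top)

theorem gaussDensity_eq_exp_mul {d : ℕ} (x y : Euc d) :
    gaussDensity d y = exp (‖x‖ ^ 2 - ‖y‖ ^ 2) * gaussDensity d x := by
  unfold gaussDensity
  rw [mul_left_comm, ← exp_add]
  ring_nf

theorem gaussDensity_le_of_abs_le {d : ℕ} {x y : Euc d} {K : ℝ}
    (h : |‖y‖ ^ 2 - ‖x‖ ^ 2| ≤ K) : gaussDensity d y ≤ exp K * gaussDensity d x := by
  rw [gaussDensity_eq_exp_mul x y]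
  exact mul_le_mul_of_nonneg_right (exp_le_exp.2 (by linarith [(abs_le.1 h).1]))
    (gaussDensity_pos x).le

theorem le_gaussDensity_of_abs_le {d : ℕ} {x y : Euc d} {K : ℝ}
    (h : |‖y‖ ^ 2 - ‖x‖ ^ 2| ≤ K) : exp (-K) * gaussDensity d x ≤ gaussDensity d y := by
  rw [gaussDensity_eq_exp_mul x y]
  exact mul_le_mul_of_nonneg_right (exp_le_exp.2 (by linarith [(abs_le.1 h).2]))
    (gaussDensity_pos x).le

def gaussRadialConst (d : ℕ) (β : ℝ) : ℝ :=
  (π ^ (-(d : ℝ) / 2)) ^ (β - 1) * volume.real (ball (0 : Euc d) 1) ^ (β - 1)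

theorem gaussRadialConst_pos (d : ℕ) (β : ℝ) : 0 < gaussRadialConst d β := by
  have hw : 0 < volume.real (ball (0 : Euc d) 1) :=
    ENNReal.toReal_pos (measure_ball_pos _ _ one_pos).ne' measure_ball_lt_top.ne
  unfold gaussRadialConst
  positivity

theorem gaussDensity_rpow_mul_volume_real_ball_rpow {d : ℕ} (x : Euc d) {ρ : ℝ} (hρ : 0 < ρ)
    (β : ℝ) :
    gaussDensity d x ^ β * volume.real (ball x ρ) ^ (β - 1) =
      gaussRadialConst d β * (π ^ (-(d : ℝ) / 2) * exp (-β * ‖x‖ ^ 2)) *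
        ρ ^ ((d : ℝ) * β - d) := by
  have hφ : gaussDensity d x ^ β =
      (π ^ (-(d : ℝ) / 2)) ^ (β - 1) * (π ^ (-(d : ℝ) / 2) * exp (-β * ‖x‖ ^ 2)) := by
    unfold gaussDensity
    rw [mul_rpow (by positivity) (exp_pos _).le, ← exp_mul, rpow_sub_one (by positivity)]
    field_simp
  rw [hφ, volume_real_ball_rpow x hρ, gaussRadialConst]
  ring

section LocalComparison

variable {d : ℕ} {x : Euc d} {r K β : ℝ}

theorem gaussMeasure_ball_le (hK : ∀ y ∈ ball x r, |‖y‖ ^ 2 - ‖x‖ ^ 2| ≤ K) {ρ : ℝ}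
    (hρ : ρ ≤ r) :
    gaussMeasure d (ball x ρ) ≤
      ENNReal.ofReal (exp K * gaussDensity d x * volume.real (ball x ρ)) := by
  rw [gaussMeasure_eq_withDensity, withDensity_apply _ measurableSet_ball,
    ENNReal.ofReal_mul (mul_pos (exp_pos _) (gaussDensity_pos x)).le, ofReal_measureReal,
    ← setLIntegral_const]
  exact setLIntegral_mono' measurableSet_ball fun y hy =>
    ENNReal.ofReal_le_ofReal (gaussDensity_le_of_abs_le (hK y (ball_subset_ball hρ hy)))

theorem le_gaussMeasure_ball (hK : ∀ y ∈ ball x r, |‖y‖ ^ 2 - ‖x‖ ^ 2| ≤ K) {ρ : ℝ}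
    (hρ : ρ ≤ r) :
    ENNReal.ofReal (exp (-K) * gaussDensity d x * volume.real (ball x ρ)) ≤
      gaussMeasure d (ball x ρ) := by
  rw [gaussMeasure_eq_withDensity, withDensity_apply _ measurableSet_ball,
    ENNReal.ofReal_mul (mul_pos (exp_pos _) (gaussDensity_pos x)).le, ofReal_measureReal,
    ← setLIntegral_const]
  exact setLIntegral_mono' measurableSet_ball fun y hy =>
    ENNReal.ofReal_le_ofReal (le_gaussDensity_of_abs_le (hK y (ball_subset_ball hρ hy)))

theorem ofReal_gaussDensity_mul_gaussMeasure_ball_rpow_le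
    (hK : ∀ y ∈ ball x r, |‖y‖ ^ 2 - ‖x‖ ^ 2| ≤ K) (hβ : β ≤ 1) {y : Euc d}
    (hy : y ∈ ball x r) (hyx : y ≠ x) :
    ENNReal.ofReal (gaussDensity d y) * gaussMeasure d (ball x ‖x - y‖) ^ (β - 1) ≤
      ENNReal.ofReal (exp ((2 - β) * K) * gaussRadialConst d β *
        (π ^ (-(d : ℝ) / 2) * exp (-β * ‖x‖ ^ 2)) * ‖x - y‖ ^ ((d : ℝ) * β - d)) := by
  have hρ : 0 < ‖x - y‖ := norm_pos_iff.2 (sub_ne_zero.2 hyx.symm)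
  have hρr : ‖x - y‖ ≤ r := by rw [← dist_eq_norm, dist_comm]; exact (mem_ball.1 hy).le
  have hV : 0 < volume.real (ball x ‖x - y‖) :=
    ENNReal.toReal_pos (measure_ball_pos _ _ hρ).ne' measure_ball_lt_top.ne
  have hu := gaussDensity_pos x
  calc ENNReal.ofReal (gaussDensity d y) * gaussMeasure d (ball x ‖x - y‖) ^ (β - 1)
      ≤ ENNReal.ofReal (exp K * gaussDensity d x) * ENNReal.ofReal
          ((exp (-K) * gaussDensity d x * volume.real (ball x ‖x - y‖)) ^ (β - 1)) := by
        rw [← ENNReal.ofReal_rpow_of_pos (by positivity)]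
        exact mul_le_mul' (ENNReal.ofReal_le_ofReal (gaussDensity_le_of_abs_le (hK y hy)))
          (ENNReal.rpow_le_rpow_of_nonpos (le_gaussMeasure_ball hK hρr) (by linarith))
    _ = _ := by
        rw [← ENNReal.ofReal_mul (by positivity), exp_mul_mul_rpow_eq hu hV,
          gaussDensity_rpow_mul_volume_real_ball_rpow x hρ]
        ring_nf

theorem ofReal_le_ofReal_gaussDensity_mul_gaussMeasure_ball_rpow
    (hK : ∀ y ∈ ball x r, |‖y‖ ^ 2 - ‖x‖ ^ 2| ≤ K) (hβ : β ≤ 1) {y : Euc d}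
    (hy : y ∈ ball x r) (hyx : y ≠ x) :
    ENNReal.ofReal (exp ((2 - β) * -K) * gaussRadialConst d β *
        (π ^ (-(d : ℝ) / 2) * exp (-β * ‖x‖ ^ 2)) * ‖x - y‖ ^ ((d : ℝ) * β - d)) ≤
      ENNReal.ofReal (gaussDensity d y) * gaussMeasure d (ball x ‖x - y‖) ^ (β - 1) := by
  have hρ : 0 < ‖x - y‖ := norm_pos_iff.2 (sub_ne_zero.2 hyx.symm)
  have hρr : ‖x - y‖ ≤ r := by rw [← dist_eq_norm, dist_comm]; exact (mem_ball.1 hy).le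
  have hV : 0 < volume.real (ball x ‖x - y‖) :=
    ENNReal.toReal_pos (measure_ball_pos _ _ hρ).ne' measure_ball_lt_top.ne
  have hu := gaussDensity_pos x
  have key := exp_mul_mul_rpow_eq hu hV (-K) β
  rw [neg_neg] at key
  calc _ = ENNReal.ofReal (exp (-K) * gaussDensity d x) * ENNReal.ofReal
          ((exp K * gaussDensity d x * volume.real (ball x ‖x - y‖)) ^ (β - 1)) := by
        rw [← ENNReal.ofReal_mul (by positivity), key,
          gaussDensity_rpow_mul_volume_real_ball_rpow x hρ]
        ring_nf
    _ ≤ ENNReal.ofReal (gaussDensity d y) * gaussMeasure d (ball x ‖x - y‖) ^ (β - 1) := by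
        rw [← ENNReal.ofReal_rpow_of_pos (by positivity)]
        exact mul_le_mul' (ENNReal.ofReal_le_ofReal (le_gaussDensity_of_abs_le (hK y hy)))
          (ENNReal.rpow_le_rpow_of_nonpos (gaussMeasure_ball_le hK hρr) (by linarith))

/- At the centre `y = x` the integrand involves `γ(B(x, 0)) ^ (β - 1) = ∞`; the comparisons
below hold only off that point, which is Lebesgue-null because `d ≠ 0`. -/

variable [NeZero d]

theorem ofReal_mul_radial_le_setLIntegral_gaussMeasure
    (hK : ∀ y ∈ ball x r, |‖y‖ ^ 2 - ‖x‖ ^ 2| ≤ K) (hβ : β ≤ 1) (f : Euc d → ℝ≥0∞) :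
    ENNReal.ofReal (exp ((2 - β) * -K) * gaussRadialConst d β) *
        (ENNReal.ofReal (π ^ (-(d : ℝ) / 2) * exp (-β * ‖x‖ ^ 2)) *
          ∫⁻ y in ball 0 r, f (x - y) * ENNReal.ofReal (‖y‖ ^ ((d : ℝ) * β - d))) ≤
      ∫⁻ y in ball x r, f y * gaussMeasure d (ball x ‖x - y‖) ^ (β - 1) ∂gaussMeasure d := by
  have hc := mul_pos (exp_pos ((2 - β) * -K)) (gaussRadialConst_pos d β)
  rw [setLIntegral_gaussMeasure_eq _ measurableSet_ball, ← mul_assoc,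
    ← ENNReal.ofReal_mul hc.le,
    ofReal_mul_setLIntegral_ball_zero_comp_sub f (· ^ ((d : ℝ) * β - d)) x r (by positivity)]
  refine setLIntegral_mono_ae' measurableSet_ball ?_
  filter_upwards [volume.ae_ne x] with y hyx hy
  exact (mul_le_mul' le_rfl
    (ofReal_le_ofReal_gaussDensity_mul_gaussMeasure_ball_rpow hK hβ hy hyx)).trans_eq
    (mul_left_comm _ _ _)

theorem setLIntegral_gaussMeasure_le_ofReal_mul_radial
    (hK : ∀ y ∈ ball x r, |‖y‖ ^ 2 - ‖x‖ ^ 2| ≤ K) (hβ : β ≤ 1) (f : Euc d → ℝ≥0∞) :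
    ∫⁻ y in ball x r, f y * gaussMeasure d (ball x ‖x - y‖) ^ (β - 1) ∂gaussMeasure d ≤
      ENNReal.ofReal (exp ((2 - β) * K) * gaussRadialConst d β) *
        (ENNReal.ofReal (π ^ (-(d : ℝ) / 2) * exp (-β * ‖x‖ ^ 2)) *
          ∫⁻ y in ball 0 r, f (x - y) * ENNReal.ofReal (‖y‖ ^ ((d : ℝ) * β - d))) := by
  have hc := mul_pos (exp_pos ((2 - β) * K)) (gaussRadialConst_pos d β)
  rw [setLIntegral_gaussMeasure_eq _ measurableSet_ball, ← mul_assoc,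
    ← ENNReal.ofReal_mul hc.le,
    ofReal_mul_setLIntegral_ball_zero_comp_sub f (· ^ ((d : ℝ) * β - d)) x r (by positivity)]
  refine setLIntegral_mono_ae' measurableSet_ball ?_
  filter_upwards [volume.ae_ne x] with y hyx hy
  exact (mul_left_comm _ _ _).trans_le
    (mul_le_mul' le_rfl (ofReal_gaussDensity_mul_gaussMeasure_ball_rpow_le hK hβ hy hyx))

end LocalComparison

/-- the local fractional integral is pointwise equivalent to its "radial"
form with respect to Lebesgue measure. -/
theorem stmt17 {d : ℕ} (hd : 0 < d) (a : ℝ) (ha : 0 < a)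
    (β : ℝ) (hβ : β ∈ Ioo (0 : ℝ) 1) :
    ∃ c₁ c₂ : ℝ, 0 < c₁ ∧ c₁ ≤ c₂ ∧
      ∀ f : Euc d → ℝ≥0∞, Measurable f → ∀ x : Euc d,
        (ENNReal.ofReal c₁ *
            (ENNReal.ofReal (Real.pi ^ (-(d : ℝ) / 2) * Real.exp (-β * ‖x‖ ^ 2)) *
              ∫⁻ y in ball (0 : Euc d) (a * adm x),
                f (x - y) * ENNReal.ofReal (‖y‖ ^ ((d : ℝ) * β - d)) ∂volume) ≤
          ∫⁻ y in ball x (a * adm x),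
            f y * (gaussMeasure d (ball x ‖x - y‖)) ^ (β - 1) ∂gaussMeasure d) ∧
        (∫⁻ y in ball x (a * adm x),
            f y * (gaussMeasure d (ball x ‖x - y‖)) ^ (β - 1) ∂gaussMeasure d ≤
          ENNReal.ofReal c₂ *
            (ENNReal.ofReal (Real.pi ^ (-(d : ℝ) / 2) * Real.exp (-β * ‖x‖ ^ 2)) *
              ∫⁻ y in ball (0 : Euc d) (a * adm x),
                f (x - y) * ENNReal.ofReal (‖y‖ ^ ((d : ℝ) * β - d)) ∂volume)) := by
  have : NeZero d := ⟨hd.ne'⟩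
  set K := 2 * a + a ^ 2
  have hK0 : 0 ≤ K := by positivity
  have hβ1 : β ≤ 1 := hβ.2.le
  refine ⟨exp ((2 - β) * -K) * gaussRadialConst d β, exp ((2 - β) * K) * gaussRadialConst d β,
    mul_pos (exp_pos _) (gaussRadialConst_pos d β), ?_, fun f _ x => ?_⟩
  · exact mul_le_mul_of_nonneg_right (exp_le_exp.2 (by nlinarith)) (gaussRadialConst_pos d β).le
  have hball : ∀ y ∈ ball x (a * adm x), |‖y‖ ^ 2 - ‖x‖ ^ 2| ≤ K := fun y hy =>
    abs_norm_sq_sub_norm_sq_le ha.le (by rw [← dist_eq_norm]; exact (mem_ball.1 hy).le)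
  exact ⟨ofReal_mul_radial_le_setLIntegral_gaussMeasure hball hβ1 f,
    setLIntegral_gaussMeasure_le_ofReal_mul_radial hball hβ1 f⟩
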